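/- In the single-server meta-queue finite-horizon dynamic program, the pairwise decision functions are monotone: for all distinct i, j ∈ {0,…,N}, all t ∈ {1,…,T}, and all states n ∈ ℤ^N, γ_ij^t(n + e_i) ≥ γ_ij^t(n) and γ_ij^t(n + e_j) ≤ γ_ij^t(n). -/
import Mathlib


open Finset

/-- Discrete convexity of a function `ψ : ℤ → ℝ`:
`ψ(k) − ψ(k−1) ≤ ψ(k+1) − ψ(k)` for every `k`. -/
def IntConvex (ψ : ℤ → ℝ) : Prop :=
  ∀ k : ℤ, ψ k - ψ (k - 1) ≤ ψ (k + 1) - ψ k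

/-- The scheduling vector `e_i ∈ ℤ^N` for meta-queue index `i ∈ {0,…,N}`:
`e_0 = 0` (idling) and for `i ≥ 1`, `e_i` is the `i`-th standard unit vector. -/
def eVec (N : ℕ) (i : Fin (N + 1)) : Fin N → ℤ :=
  fun j => if (i : ℕ) = (j : ℕ) + 1 then 1 else 0

def uv {N : ℕ} (i : Fin N) : Fin N → ℤ := fun j => if i = j then 1 else 0

def Exc {N : ℕ} (f : (Fin N → ℤ) → ℝ) : Prop :=
  ∀ x y : Fin N → ℤ, ∀ i : Fin N, y i < x i →
    f (x - uv i) + f (y + uv i) ≤ f x + f y ∨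
      ∃ j : Fin N, x j < y j ∧ f (x - uv i + uv j) + f (y + uv i - uv j) ≤ f x + f y

lemma intConvex_slope {ψ : ℤ → ℝ} (h : IntConvex ψ) :
    ∀ m n : ℤ, m ≤ n → ψ (m + 1) - ψ m ≤ ψ (n + 1) - ψ n := by
  have key : ∀ d : ℕ, ∀ m : ℤ, ψ (m + 1) - ψ m ≤ ψ (m + d + 1) - ψ (m + d) := by
    intro d
    induction d with
    | zero => intro m; simp
    | succ d ih =>
      intro m
      have h2 := h (m + d + 1)
      have e1 : (m : ℤ) + d + 1 - 1 = m + d := by ring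
      have e2 : (m : ℤ) + (d + 1 : ℕ) = m + d + 1 := by push_cast; ring
      rw [e1] at h2
      rw [e2]
      have := ih m
      linarith
  intro m n hmn
  obtain ⟨d, hd⟩ : ∃ d : ℕ, n = m + d := ⟨(n - m).toNat, by omega⟩
  subst hd
  exact key d m

lemma intConvex_pair {ψ : ℤ → ℝ} (h : IntConvex ψ) {a b : ℤ} (hba : b < a) :
    ψ (a - 1) + ψ (b + 1) ≤ ψ a + ψ b := by
  have h1 := intConvex_slope h b (a - 1) (by omega)
  have : (a : ℤ) - 1 + 1 = a := by ring
  rw [this] at h1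
  linarith

lemma eVec_zero {N : ℕ} : eVec N 0 = 0 := by
  funext j; simp [eVec]

lemma eVec_succ {N : ℕ} (i : Fin N) : eVec N i.succ = uv i := by
  funext j
  simp only [eVec, uv, Fin.val_succ]
  by_cases h : i = j
  · subst h; simp
  · have : (i : ℕ) ≠ (j : ℕ) := fun hh => h (Fin.val_injective hh)
    simp [h, this]

lemma eVec_apply {N : ℕ} (u : Fin (N + 1)) (i : Fin N) :
    eVec N u i = if u = i.succ then 1 else 0 := by
  by_cases h : u = i.succ
  · subst h; rw [eVec_succ]; simp [uv]
  · have : (u : ℕ) ≠ (i : ℕ) + 1 := by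
      intro hh
      apply h
      apply Fin.val_injective
      rw [hh, Fin.val_succ]
    simp [eVec, this, h]

lemma exc_congr {N : ℕ} {F G : (Fin N → ℤ) → ℝ} (h : ∀ z, F z = G z) (hF : Exc F) :
    Exc G := (funext h) ▸ hF

lemma exc_zero {N : ℕ} : Exc (fun _ : Fin N → ℤ => (0 : ℝ)) := by
  intro x y i h; left; simp

lemma exc_add_sep {N : ℕ} {f : (Fin N → ℤ) → ℝ} (hf : Exc f)
    (ψ : Fin N → ℤ → ℝ) (hc : ∀ q, IntConvex (ψ q)) (c : Fin N → ℤ) :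
    Exc (fun m => f m + ∑ q, ψ q (m q - c q)) := by
  intro x y i hyx
  rcases hf x y i hyx with ha | ⟨j, hj, hb⟩
  · left
    simp only
    have hsum : ∑ q, ψ q ((x - uv i) q - c q) + ∑ q, ψ q ((y + uv i) q - c q)
        ≤ ∑ q, ψ q (x q - c q) + ∑ q, ψ q (y q - c q) := by
      rw [← Finset.sum_add_distrib, ← Finset.sum_add_distrib]
      apply Finset.sum_le_sum
      intro q _
      by_cases hq : q = i
      · subst hq
        have e1 : (x - uv q) q - c q = (x q - c q) - 1 := by simp [uv]; ring
        have e2 : (y + uv q) q - c q = (y q - c q) + 1 := by simp [uv]; ring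
        rw [e1, e2]
        exact intConvex_pair (hc q) (by omega)
      · have e1 : (x - uv i) q - c q = x q - c q := by
          simp [uv, Pi.sub_apply, (Ne.symm hq)]
        have e2 : (y + uv i) q - c q = y q - c q := by
          simp [uv, Pi.add_apply, (Ne.symm hq)]
        rw [e1, e2]
    linarith
  · right
    refine ⟨j, hj, ?_⟩
    simp only
    have hij : i ≠ j := by rintro rfl; omega
    have hsum : ∑ q, ψ q ((x - uv i + uv j) q - c q) + ∑ q, ψ q ((y + uv i - uv j) q - c q)
        ≤ ∑ q, ψ q (x q - c q) + ∑ q, ψ q (y q - c q) := by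
      rw [← Finset.sum_add_distrib, ← Finset.sum_add_distrib]
      apply Finset.sum_le_sum
      intro q _
      by_cases hqi : q = i
      · subst hqi
        have e1 : (x - uv q + uv j) q - c q = (x q - c q) - 1 := by
          simp [uv, (Ne.symm hij)]; ring
        have e2 : (y + uv q - uv j) q - c q = (y q - c q) + 1 := by
          simp [uv, (Ne.symm hij)]; ring
        rw [e1, e2]
        exact intConvex_pair (hc q) (by omega)
      · by_cases hqj : q = j
        · subst hqj
          have hij' : i ≠ q := hij
          have e1 : (x - uv i + uv q) q - c q = (x q - c q) + 1 := by
            simp [uv, hij']; ring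
          have e2 : (y + uv i - uv q) q - c q = (y q - c q) - 1 := by
            simp [uv, hij']; ring
          rw [e1, e2]
          have := intConvex_pair (hc q) (show x q - c q < y q - c q by omega)
          linarith
        · have e1 : (x - uv i + uv j) q - c q = x q - c q := by
            simp [uv, Ne.symm hqi, Ne.symm hqj]
          have e2 : (y + uv i - uv j) q - c q = y q - c q := by
            simp [uv, Ne.symm hqi, Ne.symm hqj]
          rw [e1, e2]
    linarith

theorem exc_min {N : ℕ} (f : (Fin N → ℤ) → ℝ) (hf : Exc f) :
    Exc (fun z => Finset.univ.inf' Finset.univ_nonempty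
      (fun u : Fin (N + 1) => f (z + eVec N u))) := by
  set G : (Fin N → ℤ) → ℝ := fun z => Finset.univ.inf' Finset.univ_nonempty
      (fun u : Fin (N + 1) => f (z + eVec N u)) with hGdef
  have hle : ∀ (z : Fin N → ℤ) (w : Fin (N + 1)), G z ≤ f (z + eVec N w) := by
    intro z w
    exact Finset.inf'_le _ (Finset.mem_univ w)
  have hex : ∀ z : Fin N → ℤ, ∃ w : Fin (N + 1), G z = f (z + eVec N w) := by
    intro z
    obtain ⟨w, _, hw⟩ := Finset.exists_mem_eq_inf' (Finset.univ_nonempty)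
      (fun u : Fin (N + 1) => f (z + eVec N u))
    exact ⟨w, hw⟩
  -- L0 : common minimizer index
  have L0 : ∀ (w : Fin (N + 1)) (x y : Fin N → ℤ) (i : Fin N), y i < x i →
      G x = f (x + eVec N w) → G y = f (y + eVec N w) →
      (G (x - uv i) + G (y + uv i) ≤ G x + G y ∨
        ∃ j : Fin N, x j < y j ∧ G (x - uv i + uv j) + G (y + uv i - uv j) ≤ G x + G y) := by
    intro w x y i hyx hgx hgy
    have h1 : (y + eVec N w) i < (x + eVec N w) i := by
      simp only [Pi.add_apply]; omega
    rcases hf (x + eVec N w) (y + eVec N w) i h1 with ha | ⟨j, hj, hb⟩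
    · left
      rw [show x + eVec N w - uv i = (x - uv i) + eVec N w from by abel,
          show y + eVec N w + uv i = (y + uv i) + eVec N w from by abel] at ha
      have b1 := hle (x - uv i) w
      have b2 := hle (y + uv i) w
      linarith [ha, hgx, hgy, b1, b2]
    · right
      have hj' : x j < y j := by
        simp only [Pi.add_apply] at hj; omega
      refine ⟨j, hj', ?_⟩
      rw [show x + eVec N w - uv i + uv j = (x - uv i + uv j) + eVec N w from by abel,
          show y + eVec N w + uv i - uv j = (y + uv i - uv j) + eVec N w from by abel] at hb
      have b1 := hle (x - uv i + uv j) w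
      have b2 := hle (y + uv i - uv j) w
      linarith [hb, hgx, hgy, b1, b2]
  intro x y i hyx
  obtain ⟨u, hu⟩ := hex x
  obtain ⟨v, hv⟩ := hex y
  by_cases hcase : (y + eVec N v) i < (x + eVec N u) i
  · -- CASE 1
    rcases hf (x + eVec N u) (y + eVec N v) i hcase with ha | ⟨jj, hjj, hb⟩
    · left
      rw [show x + eVec N u - uv i = (x - uv i) + eVec N u from by abel,
          show y + eVec N v + uv i = (y + uv i) + eVec N v from by abel] at ha
      have b1 := hle (x - uv i) u
      have b2 := hle (y + uv i) v
      linarith [ha, hu, hv, b1, b2]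
    · by_cases hxyj : x jj < y jj
      · right
        refine ⟨jj, hxyj, ?_⟩
        rw [show x + eVec N u - uv i + uv jj = (x - uv i + uv jj) + eVec N u from by abel,
            show y + eVec N v + uv i - uv jj = (y + uv i - uv jj) + eVec N v from by abel] at hb
        have b1 := hle (x - uv i + uv jj) u
        have b2 := hle (y + uv i - uv jj) v
        linarith [hb, hu, hv, b1, b2]
      · -- b2 : v = jj.succ, u ≠ jj.succ, x jj = y jj
        push_neg at hxyj
        have hEu := eVec_apply u jj
        have hEv := eVec_apply v jj
        have hjj' : (x + eVec N u) jj < (y + eVec N v) jj := hjj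
        simp only [Pi.add_apply] at hjj'
        have hvjj : v = jj.succ := by
          by_contra hc
          rw [hEv, if_neg hc] at hjj'
          rw [hEu] at hjj'
          split at hjj' <;> omega
        have hujj : u ≠ jj.succ := by
          intro hc
          rw [hEv, if_pos hvjj, hEu, if_pos hc] at hjj'
          omega
        have hxyeq : x jj = y jj := by
          rw [hEv, if_pos hvjj, hEu, if_neg hujj] at hjj'
          omega
        have hvval : eVec N v = uv jj := by rw [hvjj, eVec_succ]
        rw [hvval] at hb hv
        rw [show y + uv jj + uv i - uv jj = y + uv i from by abel] at hb
        -- hb : f (x + eVec N u - uv i + uv jj) + f (y + uv i) ≤ f (x + eVec N u) + f (y + uv jj)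
        have hiji : jj ≠ i := by
          intro hc
          rw [hc] at hjj
          exact lt_asymm hcase hjj
        rcases Fin.eq_zero_or_eq_succ u with hu0 | ⟨p, hup⟩
        · -- b2-i : u = 0 : conclusion A
          left
          rw [hu0, eVec_zero] at hb hu
          rw [show x + 0 - uv i + uv jj = (x - uv i) + uv jj from by abel,
              show x + 0 = x from by abel] at hb
          rw [show x + 0 = x from by abel] at hu
          have b1 : G (x - uv i) ≤ f (x - uv i + uv jj) := by
            have := hle (x - uv i) jj.succ
            rwa [eVec_succ] at this
          have b2 : G (y + uv i) ≤ f (y + uv i) := by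
            have := hle (y + uv i) 0
            rwa [eVec_zero, add_zero] at this
          linarith [hb, hu, hv, b1, b2]
        · by_cases hpi : p = i
          · -- b2-ii : u = i.succ
            have hEui : eVec N u = uv i := by rw [hup, hpi, eVec_succ]
            rw [hEui] at hb hu
            rw [show x + uv i - uv i + uv jj = x + uv jj from by abel] at hb
            have b1 : G x ≤ f (x + uv jj) := by
              have := hle x jj.succ; rwa [eVec_succ] at this
            have b2 : G y ≤ f (y + uv i) := by
              have := hle y i.succ; rwa [eVec_succ] at this
            have heq : G y = f (y + uv i) := by
              have hle2 : f (y + uv i) ≤ G y := by linarith [hb, hu, hv, b1]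
              linarith [b2, hle2]
            have hgx' : G x = f (x + eVec N i.succ) := by rwa [eVec_succ]
            have hgy' : G y = f (y + eVec N i.succ) := by rwa [eVec_succ]
            exact L0 i.succ x y i hyx hgx' hgy'
          · have hpjj : p ≠ jj := by
              intro hc; exact hujj (by rw [hup, hc])
            have hEup : eVec N u = uv p := by rw [hup, eVec_succ]
            rw [hEup] at hb hu
            by_cases hxp : x p < y p
            · -- b2-iii : B_p
              right
              refine ⟨p, hxp, ?_⟩
              rw [show x + uv p - uv i + uv jj = (x - uv i + uv p) + uv jj from by abel] at hb
              have b1 : G (x - uv i + uv p) ≤ f (x - uv i + uv p + uv jj) := by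
                have := hle (x - uv i + uv p) jj.succ; rwa [eVec_succ] at this
              have b2 : G (y + uv i - uv p) ≤ f (y + uv i) := by
                have := hle (y + uv i - uv p) p.succ
                rwa [eVec_succ, show y + uv i - uv p + uv p = y + uv i from by abel] at this
              linarith [hb, hu, hv, b1, b2]
            · -- b2-iv : second exchange at (P, y+uv i, p)
              push_neg at hxp
              have hPp : (y + uv i) p < (x + uv p - uv i + uv jj) p := by
                simp only [Pi.add_apply, Pi.sub_apply]
                simp [uv, hpi, hpjj, Ne.symm hpi]
                omega
              rcases hf (x + uv p - uv i + uv jj) (y + uv i) p hPp with hc | ⟨k, hk, hd⟩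
              · -- A
                left
                rw [show x + uv p - uv i + uv jj - uv p = (x - uv i) + uv jj from by abel] at hc
                have b1 : G (x - uv i) ≤ f (x - uv i + uv jj) := by
                  have := hle (x - uv i) jj.succ; rwa [eVec_succ] at this
                have b2 : G (y + uv i) ≤ f (y + uv i + uv p) := by
                  have := hle (y + uv i) p.succ; rwa [eVec_succ] at this
                linarith [hb, hc, hu, hv, b1, b2]
              · by_cases hki : k = i
                · -- k = i : derive common minimizer jj
                  rw [hki] at hd
                  rw [show x + uv p - uv i + uv jj - uv p + uv i = x + uv jj from by abel,
                      show y + uv i + uv p - uv i = y + uv p from by abel] at hd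
                  have b1 : G x ≤ f (x + uv jj) := by
                    have := hle x jj.succ; rwa [eVec_succ] at this
                  have b2 : G y ≤ f (y + uv p) := by
                    have := hle y p.succ; rwa [eVec_succ] at this
                  have heq : G x = f (x + uv jj) := by
                    have : f (x + uv jj) ≤ G x := by linarith [hb, hd, hu, hv, b2]
                    linarith [b1, this]
                  have hgx' : G x = f (x + eVec N jj.succ) := by rwa [eVec_succ]
                  have hgy' : G y = f (y + eVec N jj.succ) := by rwa [eVec_succ]
                  exact L0 jj.succ x y i hyx hgx' hgy'
                · -- k ∉ {p, jj, i} : B_k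
                  have hkp : k ≠ p := by
                    intro hc2; subst hc2
                    simp only [Pi.add_apply, Pi.sub_apply] at hk
                    simp [uv, hpi, hpjj, Ne.symm hpi] at hk
                    omega
                  have hkjj : k ≠ jj := by
                    intro hc2; subst hc2
                    simp only [Pi.add_apply, Pi.sub_apply] at hk
                    simp [uv, Ne.symm hpjj, hiji, hki] at hk
                    omega
                  have hxk : x k < y k := by
                    simp only [Pi.add_apply, Pi.sub_apply] at hk
                    simp [uv, Ne.symm hkp, Ne.symm hki, Ne.symm hkjj] at hk
                    omega
                  right
                  refine ⟨k, hxk, ?_⟩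
                  rw [show x + uv p - uv i + uv jj - uv p + uv k = (x - uv i + uv k) + uv jj from by abel,
                      show y + uv i + uv p - uv k = (y + uv i - uv k) + uv p from by abel] at hd
                  have b1 : G (x - uv i + uv k) ≤ f (x - uv i + uv k + uv jj) := by
                    have := hle (x - uv i + uv k) jj.succ; rwa [eVec_succ] at this
                  have b2 : G (y + uv i - uv k) ≤ f (y + uv i - uv k + uv p) := by
                    have := hle (y + uv i - uv k) p.succ; rwa [eVec_succ] at this
                  linarith [hb, hd, hu, hv, b1, b2]
  · -- CASE 2
    push_neg at hcase
    have hEu := eVec_apply u i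
    have hEv := eVec_apply v i
    have hcase' : (x + eVec N u) i ≤ (y + eVec N v) i := hcase
    simp only [Pi.add_apply] at hcase'
    have huv : u ≠ i.succ := by
      intro hc
      rw [hEu, if_pos hc] at hcase'
      rw [hEv] at hcase'
      split at hcase' <;> omega
    have hvi : v = i.succ := by
      by_contra hc
      rw [hEu, if_neg huv, hEv, if_neg hc] at hcase'
      omega
    have hxieq : x i = y i + 1 := by
      rw [hEu, if_neg huv, hEv, if_pos hvi] at hcase'
      omega
    have hvval : eVec N v = uv i := by rw [hvi, eVec_succ]
    rw [hvval] at hv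
    rcases Fin.eq_zero_or_eq_succ u with hu0 | ⟨p, hup⟩
    · -- 2A : u = 0 : A
      left
      rw [hu0, eVec_zero, add_zero] at hu
      have b1 : G (x - uv i) ≤ f x := by
        have := hle (x - uv i) i.succ
        rwa [eVec_succ, show x - uv i + uv i = x from by abel] at this
      have b2 : G (y + uv i) ≤ f (y + uv i) := by
        have := hle (y + uv i) 0
        rwa [eVec_zero, add_zero] at this
      linarith [hu, hv, b1, b2]
    · have hpi : p ≠ i := by
        intro hc; exact huv (by rw [hup, hc])
      have hEup : eVec N u = uv p := by rw [hup, eVec_succ]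
      rw [hEup] at hu
      by_cases hxp : x p < y p
      · -- B_p direct
        right
        refine ⟨p, hxp, ?_⟩
        have b1 : G (x - uv i + uv p) ≤ f (x + uv p) := by
          have := hle (x - uv i + uv p) i.succ
          rwa [eVec_succ, show x - uv i + uv p + uv i = x + uv p from by abel] at this
        have b2 : G (y + uv i - uv p) ≤ f (y + uv i) := by
          have := hle (y + uv i - uv p) p.succ
          rwa [eVec_succ, show y + uv i - uv p + uv p = y + uv i from by abel] at this
        linarith [hu, hv, b1, b2]
      · -- exchange at (x + uv p, y + uv i, p)
        push_neg at hxp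
        have hPp : (y + uv i) p < (x + uv p) p := by
          simp only [Pi.add_apply]
          simp [uv, hpi, Ne.symm hpi]
          omega
        rcases hf (x + uv p) (y + uv i) p hPp with hc | ⟨k, hk, hd⟩
        · -- A
          left
          rw [show x + uv p - uv p = x from by abel] at hc
          have b1 : G (x - uv i) ≤ f x := by
            have := hle (x - uv i) i.succ
            rwa [eVec_succ, show x - uv i + uv i = x from by abel] at this
          have b2 : G (y + uv i) ≤ f (y + uv i + uv p) := by
            have := hle (y + uv i) p.succ; rwa [eVec_succ] at this
          linarith [hc, hu, hv, b1, b2]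
        · by_cases hki : k = i
          · exfalso
            subst hki
            simp only [Pi.add_apply] at hk
            simp [uv, Ne.symm hpi] at hk
            omega
          · have hkp : k ≠ p := by
              intro hc2; subst hc2
              simp only [Pi.add_apply] at hk
              simp [uv, hpi, Ne.symm hpi] at hk
              omega
            have hxk : x k < y k := by
              simp only [Pi.add_apply] at hk
              simp [uv, Ne.symm hkp, Ne.symm hki] at hk
              omega
            right
            refine ⟨k, hxk, ?_⟩
            rw [show x + uv p - uv p + uv k = (x - uv i + uv k) + uv i from by abel,
                show y + uv i + uv p - uv k = (y + uv i - uv k) + uv p from by abel] at hd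
            have b1 : G (x - uv i + uv k) ≤ f (x - uv i + uv k + uv i) := by
              have := hle (x - uv i + uv k) i.succ; rwa [eVec_succ] at this
            have b2 : G (y + uv i - uv k) ≤ f (y + uv i - uv k + uv p) := by
              have := hle (y + uv i - uv k) p.succ; rwa [eVec_succ] at this
            linarith [hd, hu, hv, b1, b2]

/-- **Lemma (monotonicity of the pairwise decision functions).** In the single-server
meta-queue finite-horizon dynamic program, for all distinct `i, j ∈ {0,…,N}`, all
`t ∈ {1,…,T}`, and all states `n ∈ ℤ^N`:
`γ_ij^t(n + e_i) ≥ γ_ij^t(n)` and `γ_ij^t(n + e_j) ≤ γ_ij^t(n)`. -/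
theorem stmt5
    (N T : ℕ)
    (ψ : Fin N → ℤ → ℝ)
    (hconv : ∀ i, IntConvex (ψ i))
    (hnonneg : ∀ i k, 0 ≤ ψ i k)
    (hzero : ∀ i, ψ i 0 = 0)
    (Ψ : (Fin N → ℤ) → ℝ)
    (hΨ : ∀ d, Ψ d = ∑ i, ψ i (d i))
    (Xt : ℕ → Fin N → ℤ)
    (V : ℕ → (Fin N → ℤ) → ℝ)
    (hVT : ∀ n, V (T + 1) n = 0)
    (hV : ∀ t, 1 ≤ t → t ≤ T → ∀ n,
      V t n = Finset.univ.inf' Finset.univ_nonempty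
        (fun i : Fin (N + 1) => V (t + 1) (n + eVec N i) + Ψ (n + eVec N i - Xt t)))
    (Om : ℕ → (Fin N → ℤ) → ℝ)
    (hOm : ∀ t n, Om t n = V t n + Ψ (n - Xt t))
    (γ : Fin (N + 1) → Fin (N + 1) → ℕ → (Fin N → ℤ) → ℝ)
    (hγ : ∀ i j t n, γ i j t n = Om (t + 1) (n + eVec N i) - Om (t + 1) (n + eVec N j)) :
    ∀ i j : Fin (N + 1), i ≠ j → ∀ t, 1 ≤ t → t ≤ T → ∀ n : Fin N → ℤ,
      γ i j t n ≤ γ i j t (n + eVec N i) ∧ γ i j t (n + eVec N j) ≤ γ i j t n := by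
  -- Exc holds for all value functions V t, 1 ≤ t ≤ T+1
  have hVexc : ∀ k t : ℕ, t + k = T + 1 → 1 ≤ t → Exc (V t) := by
    intro k
    induction k with
    | zero =>
      intro t ht _
      have : t = T + 1 := by omega
      subst this
      exact exc_congr (fun z => (hVT z).symm) exc_zero
    | succ k ih =>
      intro t ht h1
      have htT : t ≤ T := by omega
      have ihE : Exc (V (t + 1)) := ih (t + 1) (by omega) (by omega)
      have hΘ : Exc (fun m => V (t + 1) m + ∑ q, ψ q (m q - Xt t q)) :=
        exc_add_sep ihE ψ hconv (Xt t)
      have hmin := exc_min _ hΘ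
      have hVt : ∀ z, Finset.univ.inf' Finset.univ_nonempty
          (fun u : Fin (N + 1) =>
            V (t + 1) (z + eVec N u) + ∑ q, ψ q ((z + eVec N u) q - Xt t q)) = V t z := by
        intro z
        rw [hV t h1 htT z]
        apply Finset.inf'_congr Finset.univ_nonempty rfl
        intro w _
        rw [hΨ]
        rfl
      exact exc_congr hVt hmin
  -- Exc for Om s, 1 ≤ s ≤ T+1
  have hOmexc : ∀ s : ℕ, 1 ≤ s → s ≤ T + 1 → Exc (Om s) := by
    intro s h1 h2
    have hVs : Exc (V s) := hVexc (T + 1 - s) s (by omega) h1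
    have h3 : Exc (fun m => V s m + ∑ q, ψ q (m q - Xt s q)) :=
      exc_add_sep hVs ψ hconv (Xt s)
    apply exc_congr _ h3
    intro z
    rw [hOm, hΨ]
    rfl
  intro i j hij t h1 hT n
  have hE : Exc (Om (t + 1)) := hOmexc (t + 1) (by omega) (by omega)
  constructor
  · rw [hγ, hγ]
    rcases Fin.eq_zero_or_eq_succ i with hi0 | ⟨p, hip⟩
    · simp [hi0, eVec_zero]
    · rw [hip, eVec_succ]
      rcases Fin.eq_zero_or_eq_succ j with hj0 | ⟨q, hjq⟩
      · rw [hj0, eVec_zero, add_zero, add_zero]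
        have hlt : (n : Fin N → ℤ) p < (n + uv p + uv p) p := by
          simp [uv]
        rcases hE (n + uv p + uv p) n p hlt with ha | ⟨k, hk, hb⟩
        · rw [show n + uv p + uv p - uv p = n + uv p from by abel] at ha
          linarith
        · exfalso
          simp only [Pi.add_apply] at hk
          simp [uv] at hk
          split at hk <;> omega
      · have hpq : p ≠ q := by
          intro hc; exact hij (by rw [hip, hjq, hc])
        rw [hjq, eVec_succ]
        have hlt : (n + uv q) p < (n + uv p + uv p) p := by
          simp only [Pi.add_apply]
          simp [uv, hpq, Ne.symm hpq]
        rcases hE (n + uv p + uv p) (n + uv q) p hlt with ha | ⟨k, hk, hb⟩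
        · rw [show n + uv p + uv p - uv p = n + uv p from by abel,
              show n + uv q + uv p = n + uv p + uv q from by abel] at ha
          linarith
        · have hkq : k = q := by
            by_contra hc
            simp only [Pi.add_apply] at hk
            simp [uv, Ne.symm hc] at hk
            split at hk <;> omega
          rw [hkq] at hb
          rw [show n + uv p + uv p - uv p + uv q = n + uv p + uv q from by abel,
              show n + uv q + uv p - uv q = n + uv p from by abel] at hb
          linarith
  · rw [hγ, hγ]
    rcases Fin.eq_zero_or_eq_succ j with hj0 | ⟨q, hjq⟩
    · simp [hj0, eVec_zero]
    · rw [hjq, eVec_succ]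
      rcases Fin.eq_zero_or_eq_succ i with hi0 | ⟨p, hip⟩
      · rw [hi0, eVec_zero, add_zero, add_zero]
        have hlt : (n : Fin N → ℤ) q < (n + uv q + uv q) q := by
          simp [uv]
        rcases hE (n + uv q + uv q) n q hlt with ha | ⟨k, hk, hb⟩
        · rw [show n + uv q + uv q - uv q = n + uv q from by abel] at ha
          linarith
        · exfalso
          simp only [Pi.add_apply] at hk
          simp [uv] at hk
          split at hk <;> omega
      · have hpq : p ≠ q := by
          intro hc; exact hij (by rw [hip, hjq, hc])
        rw [hip, eVec_succ]
        have hlt : (n + uv p) q < (n + uv q + uv q) q := by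
          simp only [Pi.add_apply]
          simp [uv, hpq, Ne.symm hpq]
        rcases hE (n + uv q + uv q) (n + uv p) q hlt with ha | ⟨k, hk, hb⟩
        · rw [show n + uv q + uv q - uv q = n + uv q from by abel,
              show n + uv p + uv q = n + uv q + uv p from by abel] at ha
          linarith
        · have hkp : k = p := by
            by_contra hc
            simp only [Pi.add_apply] at hk
            simp [uv, Ne.symm hc] at hk
            split at hk <;> omega
          rw [hkp] at hb
          rw [show n + uv q + uv q - uv q + uv p = n + uv q + uv p from by abel,
              show n + uv p + uv q - uv p = n + uv q from by abel] at hb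
          linarith
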